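/- Let ρ > 1 and suppose φ : [0,∞) → ℝ satisfies: for every x ∈ [0,∞), φ(x+n)/(ρ^{x+n} l_ρ(x)) → c as n → ∞ through the integers, where c ∈ ℝ and l_ρ(x) = (1+(ρ−1){x})ρ^{−{x}}, and φ is nondecreasing. Then φ(x)/(ρ^x l_ρ(x)) → c as x → ∞ through the reals. -/

import Mathlib

open Filter

/-- The 1-periodic function `l_ρ(x) = (1+(ρ−1){x})·ρ^{−{x}}`. -/
noncomputable def lrho (ρ x : ℝ) : ℝ :=
  (1 + (ρ - 1) * Int.fract x) * ρ ^ (-Int.fract x)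

/-! The function `g(x) = ρ^x l_ρ(x) = ρ^⌊x⌋ (1 + (ρ-1){x})` is the piecewise-linear interpolation
of `n ↦ ρ^n`; it is increasing and `g(x+t) ≤ (1+(ρ-1)t) g(x)` for `0 ≤ t ≤ 1`. The grid `ℕ/m` is
the union of the finitely many shifted copies `j/m + ℕ`, so the hypothesis gives `φ/g → c` along it.
A real `x` lies between consecutive grid points `u ≤ x ≤ v`, and monotonicity of `φ` and `g`
pins `φ(x)/g(x)` between the values at `u` and `v` up to the factor `g(v)/g(u) ≤ 1 + (ρ-1)/m`. -/

open Set Topology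

theorem tendsto_of_forall_lt_tendsto_add_mul {α : Type*} {l : Filter α} {s : ℕ → α} {m : ℕ}
    (hm : 0 < m) (h : ∀ j < m, Tendsto (fun n => s (j + m * n)) atTop l) :
    Tendsto s atTop l := by
  intro U hU
  rw [mem_map]
  have hall : ∀ᶠ n in atTop, ∀ j : Fin m, s (j + m * n) ∈ U :=
    eventually_all.2 fun j => h j j.2 hU
  filter_upwards [(Nat.tendsto_div_const_atTop hm.ne').eventually hall] with k hk
  simpa only [Nat.mod_add_div, mem_preimage] using hk ⟨k % m, Nat.mod_lt k hm⟩

theorem abs_div_sub_le_of_sandwich {fu fx fv gu gx gv c e δ : ℝ} (hgu : 0 < gu)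
    (hux : gu ≤ gx) (hxv : gx ≤ gv) (hvu : gv ≤ (1 + e) * gu) (hfu : fu ≤ fx) (hfv : fx ≤ fv)
    (hu : |fu / gu - c| ≤ δ) (hv : |fv / gv - c| ≤ δ) :
    |fx / gx - c| ≤ (1 + e) * δ + |c| * e := by
  have hgx : 0 < gx := hgu.trans_le hux
  have hgv : 0 < gv := hgx.trans_le hxv
  have he : 0 ≤ e := by nlinarith
  have hδ : 0 ≤ δ := (abs_nonneg _).trans hu
  have hu' : (c - δ) * gu ≤ fu := (le_div_iff₀ hgu).1 (by linarith [(abs_le.1 hu).1])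
  have hv' : fv ≤ (c + δ) * gv := (div_le_iff₀ hgv).1 (by linarith [(abs_le.1 hv).2])
  have hgap : gv - gu ≤ e * gx := by nlinarith
  have hc_up : c * (gv - gx) ≤ |c| * (e * gx) :=
    mul_le_mul (le_abs_self c) (by linarith) (by linarith) (abs_nonneg c)
  have hc_low : c * (gx - gu) ≤ |c| * (e * gx) :=
    mul_le_mul (le_abs_self c) (by linarith) (by linarith) (abs_nonneg c)
  have hδ_up : δ * gv ≤ (1 + e) * δ * gx := by nlinarith
  have hδ_low : δ * gu ≤ (1 + e) * δ * gx := by nlinarith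
  rw [abs_le, le_sub_iff_add_le, sub_le_iff_le_add, le_div_iff₀ hgx, div_le_iff₀ hgx]
  constructor <;> linarith

noncomputable def geomInterp (ρ x : ℝ) : ℝ := ρ ^ ⌊x⌋ * (1 + (ρ - 1) * Int.fract x)

theorem rpow_mul_lrho {ρ : ℝ} (hρ : 0 < ρ) (x : ℝ) : ρ ^ x * lrho ρ x = geomInterp ρ x := by
  rw [lrho, geomInterp, mul_left_comm, ← Real.rpow_add hρ, ← sub_eq_add_neg, Int.self_sub_fract,
    Real.rpow_intCast, mul_comm]

theorem lrho_add_natCast (ρ x : ℝ) (n : ℕ) : lrho ρ (x + n) = lrho ρ x := by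
  rw [lrho, lrho, Int.fract_add_natCast]

section geomInterp

variable {ρ : ℝ}

theorem geomInterp_intCast_add (n : ℤ) {a : ℝ} (ha₀ : 0 ≤ a) (ha₁ : a < 1) :
    geomInterp ρ (n + a) = ρ ^ n * (1 + (ρ - 1) * a) := by
  rw [geomInterp, Int.floor_intCast_add, Int.fract_intCast_add,
    Int.floor_eq_zero_iff.2 ⟨ha₀, ha₁⟩, Int.fract_eq_self.2 ⟨ha₀, ha₁⟩, add_zero]

theorem geomInterp_pos (hρ : 0 < ρ) (x : ℝ) : 0 < geomInterp ρ x := by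
  have h : 0 < 1 + (ρ - 1) * Int.fract x := by
    nlinarith [Int.fract_nonneg x, Int.fract_lt_one x]
  exact mul_pos (zpow_pos hρ _) h

theorem zpow_floor_le_geomInterp (hρ : 1 ≤ ρ) (x : ℝ) : ρ ^ ⌊x⌋ ≤ geomInterp ρ x :=
  le_mul_of_one_le_right (zpow_nonneg (by linarith) _)
    (by nlinarith [Int.fract_nonneg x])

theorem geomInterp_le_zpow_floor_add_one (hρ : 1 ≤ ρ) (x : ℝ) :
    geomInterp ρ x ≤ ρ ^ (⌊x⌋ + 1) := by
  rw [zpow_add_one₀ (by positivity), geomInterp]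
  gcongr
  nlinarith [Int.fract_lt_one x]

theorem geomInterp_monotone (hρ : 1 ≤ ρ) : Monotone (geomInterp ρ) := by
  intro x y hxy
  rcases (Int.floor_mono hxy).eq_or_lt with h | h
  · have hfract : Int.fract x ≤ Int.fract y := by
      rw [← Int.self_sub_floor, ← Int.self_sub_floor, h]
      linarith
    rw [geomInterp, geomInterp, h]
    gcongr
  · calc geomInterp ρ x ≤ ρ ^ (⌊x⌋ + 1) := geomInterp_le_zpow_floor_add_one hρ x
      _ ≤ ρ ^ ⌊y⌋ := zpow_le_zpow_right₀ hρ h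
      _ ≤ geomInterp ρ y := zpow_floor_le_geomInterp hρ y

theorem geomInterp_add_le (hρ : 0 < ρ) (x : ℝ) {t : ℝ} (ht₀ : 0 ≤ t) (ht₁ : t ≤ 1) :
    geomInterp ρ (x + t) ≤ (1 + (ρ - 1) * t) * geomInterp ρ x := by
  have ha₀ := Int.fract_nonneg x
  have ha₁ := Int.fract_lt_one x
  rw [← Int.floor_add_fract x]
  generalize ⌊x⌋ = n, Int.fract x = a at *
  have hP : 0 < ρ ^ n := zpow_pos hρ _
  rw [geomInterp_intCast_add n ha₀ ha₁]
  rcases lt_or_ge (a + t) 1 with h | h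
  · rw [add_assoc, geomInterp_intCast_add n (by linarith) h]
    nlinarith [mul_nonneg (mul_nonneg hP.le (sq_nonneg (ρ - 1))) (mul_nonneg ha₀ ht₀)]
  · have hx : (n : ℝ) + a + t = ((n + 1 : ℤ) : ℝ) + (a + t - 1) := by push_cast; ring
    rw [hx, geomInterp_intCast_add (n + 1) (by linarith) (by linarith), zpow_add_one₀ hρ.ne']
    nlinarith [mul_nonneg (mul_nonneg hP.le (sq_nonneg (ρ - 1)))
      (mul_nonneg (sub_nonneg.2 ht₁) (sub_nonneg.2 ha₁.le))]

end geomInterp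

theorem eventually_abs_div_sub_le_of_grid {f g : ℝ → ℝ} {c K δ : ℝ} {m : ℕ}
    (hf : MonotoneOn f (Ici 0)) (hg : Monotone g) (hg_pos : ∀ x, 0 < g x)
    (hg_step : ∀ x t, 0 ≤ t → t ≤ 1 → g (x + t) ≤ (1 + K * t) * g x) (hm : 0 < m)
    (hgrid : ∀ᶠ k : ℕ in atTop, |f (k / m) / g (k / m) - c| ≤ δ) :
    ∀ᶠ x in atTop, |f x / g x - c| ≤ (1 + K / m) * δ + |c| * (K / m) := by
  have hmR : (0 : ℝ) < m := Nat.cast_pos.2 hm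
  have hfloor : Tendsto (fun x : ℝ => ⌊x * m⌋₊) atTop atTop :=
    tendsto_nat_floor_atTop.comp (tendsto_id.atTop_mul_const hmR)
  filter_upwards [hfloor.eventually hgrid,
    hfloor.eventually ((tendsto_add_atTop_nat 1).eventually hgrid), eventually_ge_atTop 0]
    with x hu hv hx
  set k := ⌊x * m⌋₊
  have hux : (k : ℝ) / m ≤ x := (div_le_iff₀ hmR).2 (Nat.floor_le (by positivity))
  have hxv : x ≤ ((k + 1 : ℕ) : ℝ) / m := by
    rw [le_div_iff₀ hmR]
    push_cast
    exact (Nat.lt_floor_add_one _).le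
  have hstep : g (((k + 1 : ℕ) : ℝ) / m) ≤ (1 + K / m) * g (k / m) := by
    have := hg_step (k / m) (1 / m) (by positivity)
      (div_le_one_of_le₀ (by exact_mod_cast hm) hmR.le)
    rwa [mul_one_div, ← add_div, ← Nat.cast_add_one] at this
  exact abs_div_sub_le_of_sandwich (hg_pos _) (hg hux) (hg hxv) hstep
    (hf (mem_Ici.2 (by positivity)) hx hux) (hf hx (mem_Ici.2 (by positivity)) hxv) hu hv

theorem tendsto_div_of_tendsto_div_add_natCast {f g : ℝ → ℝ} {c K : ℝ}
    (hf : MonotoneOn f (Ici 0)) (hg : Monotone g) (hg_pos : ∀ x, 0 < g x)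
    (hg_step : ∀ x t, 0 ≤ t → t ≤ 1 → g (x + t) ≤ (1 + K * t) * g x)
    (h : ∀ x, 0 ≤ x → Tendsto (fun n : ℕ => f (x + n) / g (x + n)) atTop (𝓝 c)) :
    Tendsto (fun x => f x / g x) atTop (𝓝 c) := by
  rw [Metric.tendsto_nhds]
  intro ε hε
  have hsmall : ∀ᶠ m : ℕ in atTop, (1 + K / m) * (ε / 2) + |c| * (K / m) < ε := by
    have hlim : Tendsto (fun m : ℕ => (1 + K / m) * (ε / 2) + |c| * (K / m)) atTop
        (𝓝 ((1 + 0) * (ε / 2) + |c| * 0)) :=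
      (((tendsto_const_div_atTop_nhds_zero_nat K).const_add 1).mul_const _).add
        ((tendsto_const_div_atTop_nhds_zero_nat K).const_mul _)
    exact hlim.eventually_lt_const (by linarith)
  obtain ⟨m, hm, hm_pos⟩ := (hsmall.and (eventually_gt_atTop 0)).exists
  have hgrid : Tendsto (fun k : ℕ => f (k / m) / g (k / m)) atTop (𝓝 c) := by
    refine tendsto_of_forall_lt_tendsto_add_mul hm_pos fun j _ => ?_
    refine (h (j / m) (by positivity)).congr fun n => ?_
    have hk : ((j + m * n : ℕ) : ℝ) / m = j / m + n := by
      push_cast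
      field_simp
    rw [hk]
  have hclose := (Metric.tendsto_nhds.1 hgrid (ε / 2) (half_pos hε)).mono fun _ hk =>
    (Real.dist_eq _ _ ▸ hk).le
  filter_upwards [eventually_abs_div_sub_le_of_grid hf hg hg_pos hg_step hm_pos hclose]
    with x hx
  exact Real.dist_eq _ c ▸ hx.trans_lt hm

theorem stmt18 (ρ c : ℝ) (hρ : 1 < ρ) (φ : ℝ → ℝ)
    (hmono : MonotoneOn φ (Set.Ici 0))
    (hconv : ∀ x : ℝ, 0 ≤ x →
      Tendsto (fun n : ℕ => φ (x + n) / (ρ ^ (x + (n : ℝ)) * lrho ρ x)) atTop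
        (nhds c)) :
    Tendsto (fun x : ℝ => φ x / (ρ ^ x * lrho ρ x)) atTop (nhds c) := by
  have hρ₀ : 0 < ρ := zero_lt_one.trans hρ
  simp only [rpow_mul_lrho hρ₀]
  refine tendsto_div_of_tendsto_div_add_natCast hmono (geomInterp_monotone hρ.le)
    (geomInterp_pos hρ₀) (fun x t => geomInterp_add_le hρ₀ x) fun x hx => ?_
  refine (hconv x hx).congr fun n => ?_
  rw [← lrho_add_natCast ρ x n, rpow_mul_lrho hρ₀]
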